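/- Let 𝒴 be a set of faces of maximal dimension δ, and let ν ≥ 0, D ≥ δ, and D − δ − ν ≥ 0 be integers. Then for every k ≥ 0, the summation operator satisfies S_k(𝒴; D, ν) = g_{k−ν}^{(D−δ−ν)}(𝒴), where S_k(𝒴; D, ν) = Σ_{i=0}^{D+1} (−1)^{k−i} C(D+1−i, D+1−k) f_{i−1−ν}(𝒴). -/
import Mathlib

noncomputable section

/-- The (generalized) binomial coefficient `C(a,b)` for integers `a b`, equal to `0`
for `b < 0` (and, in particular, equal to `0` when `b > a ≥ 0`). -/
noncomputable def ch (a b : ℤ) : ℤ := if 0 ≤ b then Ring.choose a b.toNat else 0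

/-- The `h`-vector associated with an `f`-vector function `fv` (where `fv (i-1)` is the
number of `(i-1)`-dimensional faces) of a face set of maximal dimension `δ`:
`h_k = ∑_{i=0}^{δ+1} (-1)^{k-i} C(δ+1-i, δ+1-k) f_{i-1}`. -/
noncomputable def hF (fv : ℤ → ℤ) (δ : ℤ) (k : ℤ) : ℤ :=
  ∑ i ∈ Finset.range (δ + 2).toNat,
    (-1 : ℤ) ^ (k - (i : ℤ)).natAbs * ch (δ + 1 - (i : ℤ)) (δ + 1 - k) * fv ((i : ℤ) - 1)

/-- The `m`-order `g`-vector: `g^{(0)} = h` and `g_k^{(m)} = g_k^{(m-1)} - g_{k-1}^{(m-1)}`. -/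
noncomputable def gF (fv : ℤ → ℤ) (δ : ℤ) : ℕ → ℤ → ℤ
  | 0 => hF fv δ
  | m + 1 => fun k => gF fv δ m k - gF fv δ m (k - 1)

/-- The summation operator `S_k(𝒴; D, ν) = ∑_{i=0}^{D+1} (-1)^{k-i} C(D+1-i, D+1-k) f_{i-1-ν}(𝒴)`. -/
noncomputable def Sop (fv : ℤ → ℤ) (D : ℤ) (ν : ℕ) (k : ℤ) : ℤ :=
  ∑ i ∈ Finset.range (D + 2).toNat,
    (-1 : ℤ) ^ (k - (i : ℤ)).natAbs * ch (D + 1 - (i : ℤ)) (D + 1 - k) *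
      fv ((i : ℤ) - 1 - (ν : ℤ))

lemma ch_eq_natChoose (a b : ℤ) (ha : 0 ≤ a) (hb : 0 ≤ b) :
    ch a b = (a.toNat.choose b.toNat : ℤ) := by
  rw [ch, if_pos hb]
  conv_lhs => rw [show a = ((a.toNat : ℕ) : ℤ) by omega]
  rw [Ring.choose_natCast]

lemma ch_pascal (a b : ℤ) (ha : 0 ≤ a) :
    ch (a + 1) b = ch a (b - 1) + ch a b := by
  rcases lt_or_ge b 0 with hb | hb
  · rw [ch, if_neg (by omega), ch, if_neg (by omega), ch, if_neg (by omega)]; ring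
  rcases eq_or_lt_of_le hb with hb0 | hb1
  · rw [ch_eq_natChoose _ _ (by omega) (by omega), ch_eq_natChoose _ _ ha hb,
      ch, if_neg (by omega), ← hb0]
    simp
  · rw [ch_eq_natChoose _ _ (by omega) (by omega), ch_eq_natChoose _ _ ha (by omega),
      ch_eq_natChoose _ _ ha hb]
    have h1 : (a + 1).toNat = a.toNat + 1 := by omega
    have h2 : b.toNat = (b - 1).toNat + 1 := by omega
    rw [h1, h2, Nat.choose_succ_succ]
    push_cast; ring

lemma neg_one_pow_natAbs (x : ℤ) :
    ((-1 : ℤ)) ^ x.natAbs = if Even x then 1 else -1 := by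
  rcases Int.even_or_odd x with h | h
  · rw [if_pos h, Even.neg_one_pow (Int.natAbs_even.mpr h)]
  · rw [if_neg (Int.not_even_iff_odd.mpr h), Odd.neg_one_pow (Int.natAbs_odd.mpr h)]

lemma neg_one_pow_natAbs_succ (x : ℤ) :
    ((-1 : ℤ)) ^ (x + 1).natAbs = -((-1 : ℤ)) ^ x.natAbs := by
  rw [neg_one_pow_natAbs, neg_one_pow_natAbs]
  rcases Int.even_or_odd x with h | h
  · rw [if_pos h, if_neg (by simpa [Int.even_add_one] using h)]
  · rw [if_neg (Int.not_even_iff_odd.mpr h),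
      if_pos (Int.even_add_one.mpr (Int.not_even_iff_odd.mpr h))]
    ring

lemma gF_zero (fv : ℤ → ℤ) (δ : ℤ) (hz : ∀ j : ℤ, fv j = 0) :
    ∀ m : ℕ, ∀ k : ℤ, gF fv δ m k = 0 := by
  intro m
  induction m with
  | zero => intro k; simp [gF, hF, hz]
  | succ m ih => intro k; simp [gF, ih]

lemma key_lemma (fv : ℤ → ℤ) (δ : ℤ) (ν : ℕ)
    (hlow : ∀ j : ℤ, j < -1 → fv j = 0)
    (hhigh : ∀ j : ℤ, δ < j → fv j = 0)
    (hδ : -1 ≤ δ) :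
    ∀ m : ℕ, ∀ k : ℤ, Sop fv (δ + (ν : ℤ) + (m : ℤ)) ν k = gF fv δ m (k - (ν : ℤ)) := by
  intro m
  induction m with
  | zero =>
    intro k
    rw [Sop, gF, hF]
    have hN : (δ + (ν : ℤ) + (0 : ℕ) + 2).toNat = ν + (δ + 2).toNat := by
      push_cast; omega
    rw [hN, Finset.sum_range_add]
    have h1 : ∑ i ∈ Finset.range ν,
        (-1 : ℤ) ^ (k - (i : ℤ)).natAbs * ch (δ + (ν : ℤ) + (0 : ℕ) + 1 - (i : ℤ))
          (δ + (ν : ℤ) + (0 : ℕ) + 1 - k) * fv ((i : ℤ) - 1 - (ν : ℤ)) = 0 := by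
      apply Finset.sum_eq_zero
      intro i hi
      rw [Finset.mem_range] at hi
      rw [hlow ((i : ℤ) - 1 - (ν : ℤ)) (by omega)]
      ring
    rw [h1, zero_add]
    apply Finset.sum_congr rfl
    intro j hj
    have hcast : ((ν + j : ℕ) : ℤ) = (ν : ℤ) + (j : ℤ) := by push_cast; ring
    rw [hcast]
    have e1 : k - ((ν : ℤ) + (j : ℤ)) = (k - (ν : ℤ)) - (j : ℤ) := by ring
    have e2 : δ + (ν : ℤ) + (0 : ℕ) + 1 - ((ν : ℤ) + (j : ℤ)) = δ + 1 - (j : ℤ) := by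
      push_cast; ring
    have e3 : δ + (ν : ℤ) + (0 : ℕ) + 1 - k = δ + 1 - (k - (ν : ℤ)) := by push_cast; ring
    have e4 : (ν : ℤ) + (j : ℤ) - 1 - (ν : ℤ) = (j : ℤ) - 1 := by ring
    rw [e1, e2, e3, e4]
  | succ m ih =>
    intro k
    set D : ℤ := δ + (ν : ℤ) + (m : ℤ) with hD
    have hDm : δ + (ν : ℤ) + ((m + 1 : ℕ) : ℤ) = D + 1 := by push_cast; ring
    rw [hDm]
    have hstep : Sop fv (D + 1) ν k = Sop fv D ν k - Sop fv D ν (k - 1) := by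
      rw [Sop, Sop, Sop]
      have hN : (D + 1 + 2).toNat = (D + 2).toNat + 1 := by omega
      rw [hN, Finset.sum_range_succ]
      have hlast : ((((D + 2).toNat : ℕ)) : ℤ) = D + 2 := by omega
      have hzero : fv ((((D + 2).toNat : ℕ) : ℤ) - 1 - (ν : ℤ)) = 0 := by
        rw [hlast]; exact hhigh _ (by omega)
      rw [hzero, mul_zero, add_zero, ← Finset.sum_sub_distrib]
      apply Finset.sum_congr rfl
      intro i hi
      rw [Finset.mem_range] at hi
      have hile : (i : ℤ) ≤ D + 1 := by omega
      have e1 : D + 1 + 1 - (i : ℤ) = (D + 1 - (i : ℤ)) + 1 := by ring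
      rw [e1, ch_pascal _ _ (by omega)]
      have e2 : D + 1 + 1 - k - 1 = D + 1 - k := by ring
      have e3 : D + 1 + 1 - k = D + 1 - (k - 1) := by ring
      rw [e2, e3]
      have e4 : k - (i : ℤ) = (k - 1 - (i : ℤ)) + 1 := by ring
      rw [e4, neg_one_pow_natAbs_succ]
      ring
    rw [hstep, ih k, ih (k - 1), gF]
    have : k - 1 - (ν : ℤ) = k - (ν : ℤ) - 1 := by ring
    rw [this]

/-- Lemma `lem:sumoperator_gvec`. For a set of faces of maximal dimension `δ`
(its `f`-vector function `fv` vanishing below `-1` and above `δ`), and integers `ν ≥ 0`,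
`D ≥ δ` with `D - δ - ν ≥ 0`, one has `S_k(𝒴; D, ν) = g_{k-ν}^{(D-δ-ν)}(𝒴)` for all `k ≥ 0`. -/
theorem sum_operator_eq_g_vector
    (fv : ℤ → ℤ) (δ D : ℤ) (ν : ℕ)
    (hlow : ∀ j : ℤ, j < -1 → fv j = 0)
    (hhigh : ∀ j : ℤ, δ < j → fv j = 0)
    (hδD : δ ≤ D) (hDδν : 0 ≤ D - δ - (ν : ℤ)) :
    ∀ k : ℕ, Sop fv D ν (k : ℤ) = gF fv δ (D - δ - (ν : ℤ)).toNat ((k : ℤ) - (ν : ℤ)) := by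
  intro k
  rcases le_or_gt (-1) δ with hδ | hδ
  · set m : ℕ := (D - δ - (ν : ℤ)).toNat with hm
    have hDm : D = δ + (ν : ℤ) + (m : ℤ) := by omega
    rw [hDm]
    exact key_lemma fv δ ν hlow hhigh hδ m k
  · have hz : ∀ j : ℤ, fv j = 0 := by
      intro j
      rcases lt_or_ge j (-1) with h | h
      · exact hlow j h
      · exact hhigh j (by omega)
    have h1 : Sop fv D ν (k : ℤ) = 0 := by
      rw [Sop]
      apply Finset.sum_eq_zero
      intro i _
      rw [hz]; ring
    rw [h1, gF_zero fv δ hz]
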